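/- arXiv:1201.0325 — 5 statements merged into one kernel-verified Lean document; each statement's English description precedes it below -/
import Mathlib

section
/- Let A be a C*-subalgebra of B(H) and let P ∈ A be a projection that commutes with every element of A and whose range is a proper subspace of H. Let E = AP = {aP : a ∈ A}, regarded as a right A-module under operator multiplication, with ρ(z) = (z*z)^{1/2} for z ∈ E. Then E is a Finsler A-module, and the inclusion map Φ : E → B(H) satisfies Φ(z)*Φ(z) = φ(ρ(z)²) and Φ(z·b) = Φ(z)φ(b) for all z ∈ E, b ∈ A, where φ : A → B(H) is the inclusion representation; yet the closed linear span of {Φ(z)h : z ∈ E, h ∈ H} is contained in the range of P and hence is not equal to H, so Φ is not a nondegenerate quasi-representation. -/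
/-!
Since `P` is a central idempotent of `A`, the module `E = AP` is `{z ∈ A | zP = z}`, a closed
right ideal of `A`, and every `z ∈ E` satisfies `z = Pz`. The Finsler axioms for
`ρ(z) = (z*z)^{1/2}` are C*-identities, and `ρ(z) ∈ A` because a closed star subalgebra is
stable under the continuous functional calculus. On the other hand every vector `z h` lies in
the closed subspace `range P`, so the vectors `z h` cannot span a dense subspace of `H`.
-/

section Ring

variable {R S : Type*} [Semiring R] [SetLike S R] {A : S} {p : R}

theorem setOf_exists_mul_eq_eq_setOf_mem_and_mul_eq_self [MulMemClass S R] (hpA : p ∈ A)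
    (hp : IsIdempotentElem p) :
    {z | ∃ a ∈ A, z = a * p} = {z | z ∈ A ∧ z * p = z} := by
  ext z
  constructor
  · rintro ⟨a, haA, rfl⟩
    exact ⟨mul_mem haA hpA, by rw [mul_assoc, hp.eq]⟩
  · rintro ⟨hzA, hzp⟩
    exact ⟨z, hzA, hzp.symm⟩

theorem mul_mem_setOf_mem_and_mul_eq_self [MulMemClass S R] (hp : ∀ a ∈ A, a * p = p * a)
    {z b : R} (hz : z ∈ {z | z ∈ A ∧ z * p = z}) (hb : b ∈ A) :
    z * b ∈ {z | z ∈ A ∧ z * p = z} :=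
  ⟨mul_mem hz.1 hb, by rw [mul_assoc, hp b hb, ← mul_assoc, hz.2]⟩

theorem isClosed_setOf_mem_and_mul_eq_self [TopologicalSpace R] [ContinuousMul R] [T2Space R]
    (hA : IsClosed (A : Set R)) :
    IsClosed {z | z ∈ A ∧ z * p = z} :=
  hA.inter (isClosed_eq (continuous_id.mul continuous_const) continuous_id)

end Ring

theorem Submodule.topologicalClosure_span_apply_le_range {R M : Type*} [Ring R]
    [TopologicalSpace M] [AddCommGroup M] [Module R M] [IsTopologicalAddGroup M]
    [ContinuousConstSMul R M] [T1Space M] {p : M →L[R] M} (hp : IsIdempotentElem p)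
    {E : Set (M →L[R] M)} (hE : ∀ z ∈ E, p * z = z) :
    (span R {v | ∃ z ∈ E, ∃ h : M, z h = v}).topologicalClosure
      ≤ LinearMap.range (p : M →ₗ[R] M) := by
  refine topologicalClosure_minimal _ (span_le.mpr ?_)
    (ContinuousLinearMap.IsIdempotentElem.isClosed_range hp)
  rintro _ ⟨z, hz, h, rfl⟩
  exact ⟨z h, DFunLike.congr_fun (hE z hz) h⟩

section CStarAlgebra

variable {B : Type*} [CStarAlgebra B] [PartialOrder B] [StarOrderedRing B]

theorem StarSubalgebra.sqrt_mem {A : StarSubalgebra ℂ B} (hA : IsClosed (A : Set B)) {a : B}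
    (haA : a ∈ A) (ha : 0 ≤ a) : CFC.sqrt a ∈ A := by
  rw [CFC.sqrt_eq_cfc, cfc_nnreal_eq_real _ a ha, cfc_real_eq_complex _ ha.isSelfAdjoint]
  exact cfc_mem (hs := hA) _ haA

theorem CFC.norm_sqrt_star_mul_self (a : B) : ‖CFC.sqrt (star a * a)‖ = ‖a‖ := by
  rw [CFC.norm_sqrt _ (star_mul_self_nonneg a), CStarRing.norm_star_mul_self,
    Real.sqrt_mul_self (norm_nonneg a)]

theorem CFC.sqrt_star_mul_self_mul_sq (a b : B) :
    CFC.sqrt (star (a * b) * (a * b)) ^ 2 = star b * CFC.sqrt (star a * a) ^ 2 * b := by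
  rw [CFC.sq_sqrt _ (star_mul_self_nonneg _), CFC.sq_sqrt _ (star_mul_self_nonneg _), star_mul]
  simp only [mul_assoc]

end CStarAlgebra

theorem finsler_module_quasi_rep_not_nondegenerate_general
    {H : Type} [NormedAddCommGroup H] [InnerProductSpace ℂ H] [CompleteSpace H]
    (A : StarSubalgebra ℂ (H →L[ℂ] H)) (hA : IsClosed (A : Set (H →L[ℂ] H)))
    (P : H →L[ℂ] H) (hPA : P ∈ A) (hPidem : P * P = P)
    (hPcomm : ∀ a ∈ A, a * P = P * a)
    (hPrange : LinearMap.range (P : H →ₗ[ℂ] H) ≠ ⊤) :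
    ∀ (E : Set (H →L[ℂ] H)), E = {z | ∃ a ∈ A, z = a * P} →
    ∀ (ρ : (H →L[ℂ] H) → (H →L[ℂ] H)), ρ = (fun z => CFC.sqrt (star z * z)) →
      (∀ z ∈ E, ∀ b ∈ A, z * b ∈ E) ∧
      IsClosed E ∧
      (∀ z ∈ E, ρ z ∈ A ∧ 0 ≤ ρ z) ∧
      (∀ z : H →L[ℂ] H, ‖ρ z‖ = ‖z‖) ∧
      (∀ z ∈ E, ∀ b ∈ A, ρ (z * b) ^ 2 = star b * ρ z ^ 2 * b) ∧
      (∀ z ∈ E, star z * z = ρ z ^ 2) ∧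
      (Submodule.span ℂ {v : H | ∃ z ∈ E, ∃ h : H, z h = v}).topologicalClosure
        ≤ LinearMap.range (P : H →ₗ[ℂ] H) ∧
      (Submodule.span ℂ {v : H | ∃ z ∈ E, ∃ h : H, z h = v}).topologicalClosure ≠ ⊤ := by
  intro E hE ρ hρ
  rw [setOf_exists_mul_eq_eq_setOf_mem_and_mul_eq_self hPA hPidem] at hE
  subst hE hρ
  have hspan := Submodule.topologicalClosure_span_apply_le_range hPidem
    fun z (hz : z ∈ A ∧ z * P = z) ↦ (hPcomm z hz.1).symm.trans hz.2
  refine ⟨fun z hz b hb ↦ mul_mem_setOf_mem_and_mul_eq_self hPcomm hz hb,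
    isClosed_setOf_mem_and_mul_eq_self hA,
    fun z hz ↦ ⟨StarSubalgebra.sqrt_mem hA (mul_mem (star_mem hz.1) hz.1)
      (star_mul_self_nonneg z), CFC.sqrt_nonneg _⟩,
    CFC.norm_sqrt_star_mul_self, fun z _ b _ ↦ CFC.sqrt_star_mul_self_mul_sq z b,
    fun z _ ↦ (CFC.sq_sqrt _ (star_mul_self_nonneg z)).symm, hspan, fun htop ↦ ?_⟩
  exact hPrange (top_le_iff.mp (htop ▸ hspan))

/-- **Remark 4.3 (fullness cannot be dropped).** Let `A ⊆ B(H)` be a closed *-subalgebra and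
`P ∈ A` a projection commuting with every element of `A`, whose range is a proper subspace
of `H`. Then `E = A P = {aP : a ∈ A}` with `ρ(z) = (z*z)^{1/2}` is a Finsler `A`-module
(closed under the right action, norm-closed, `ρ` takes values in the positive cone of `A`,
`‖ρ(z)‖ = ‖z‖`, and `ρ(zb)² = b* ρ(z)² b`), and the inclusion `Φ = id : E → B(H)` is a
quasi-representation over the inclusion `φ : A → B(H)` (`Φ(z)*Φ(z) = φ(ρ(z)²)`, and
`Φ(zb) = Φ(z)φ(b)` trivially); yet the closed span of `{Φ(z)h : z ∈ E, h ∈ H}` lies in the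
range of `P`, hence is not `H`, so `Φ` is degenerate. -/
theorem finsler_module_quasi_rep_not_nondegenerate
    {H : Type} [NormedAddCommGroup H] [InnerProductSpace ℂ H] [CompleteSpace H]
    (A : StarSubalgebra ℂ (H →L[ℂ] H)) (hA : IsClosed (A : Set (H →L[ℂ] H)))
    (P : H →L[ℂ] H) (hPA : P ∈ A) (hPidem : P * P = P) (hPsa : star P = P)
    (hPcomm : ∀ a ∈ A, a * P = P * a)
    (hPrange : LinearMap.range (P : H →ₗ[ℂ] H) ≠ ⊤) :
    ∀ (E : Set (H →L[ℂ] H)), E = {z | ∃ a ∈ A, z = a * P} →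
    ∀ (ρ : (H →L[ℂ] H) → (H →L[ℂ] H)), ρ = (fun z => CFC.sqrt (star z * z)) →
      (∀ z ∈ E, ∀ b ∈ A, z * b ∈ E) ∧
      IsClosed E ∧
      (∀ z ∈ E, ρ z ∈ A ∧ 0 ≤ ρ z) ∧
      (∀ z : H →L[ℂ] H, ‖ρ z‖ = ‖z‖) ∧
      (∀ z ∈ E, ∀ b ∈ A, ρ (z * b) ^ 2 = star b * ρ z ^ 2 * b) ∧
      (∀ z ∈ E, star z * z = ρ z ^ 2) ∧
      (Submodule.span ℂ {v : H | ∃ z ∈ E, ∃ h : H, z h = v}).topologicalClosure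
        ≤ LinearMap.range (P : H →ₗ[ℂ] H) ∧
      (Submodule.span ℂ {v : H | ∃ z ∈ E, ∃ h : H, z h = v}).topologicalClosure ≠ ⊤ :=
  finsler_module_quasi_rep_not_nondegenerate_general A hA P hPA hPidem hPcomm hPrange
end

section
/- Let E be a Finsler A-module with associated map ρ : E → A⁺, let φ : A → B(H) be a representation, and let Φ : E → B(H,K) be a quasi-representation satisfying in addition Φ(x)*Φ(y) = 0 whenever x ≠ y (as holds for the quasi-representation constructed in the paper's Theorem 2.3). If Φ is irreducible, then φ is an irreducible representation. -/
/-!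
Given a closed `φ(A)`-invariant subspace `M ⊆ H`, let `N ⊆ K` be the closed span of the
images `Φ(x) M`. Then `Φ(x) M ⊆ N` by construction, and `Φ(x)* N ⊆ M` because on the
spanning vectors `Φ(x)* Φ(y)` is either `φ(ρ(x)²)` (for `x = y`) or `0`, both of which
preserve `M`, and `M` is closed. Irreducibility of `Φ` then forces `M = 0` or `M = H`.
-/

open MulOpposite ContinuousLinearMap

section ClosedSpanImage

variable {R ι H K : Type*} [Semiring R]
  [AddCommMonoid H] [Module R H] [TopologicalSpace H]
  [AddCommMonoid K] [Module R K] [TopologicalSpace K] [ContinuousAdd K] [ContinuousConstSMul R K]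

def closedSpanImage (T : ι → H →L[R] K) (M : Submodule R H) : Submodule R K :=
  (⨆ i, M.map (T i : H →ₗ[R] K)).topologicalClosure

theorem isClosed_closedSpanImage (T : ι → H →L[R] K) (M : Submodule R H) :
    IsClosed (closedSpanImage T M : Set K) :=
  Submodule.isClosed_topologicalClosure _

theorem apply_mem_closedSpanImage {T : ι → H →L[R] K} {M : Submodule R H} (i : ι)
    {h : H} (hh : h ∈ M) : T i h ∈ closedSpanImage T M :=
  Submodule.le_topologicalClosure _ <|
    Submodule.mem_iSup_of_mem i (Submodule.mem_map_of_mem hh)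

theorem apply_mem_of_mem_closedSpanImage {T : ι → H →L[R] K} {M : Submodule R H}
    (hM : IsClosed (M : Set H)) (S : K →L[R] H) (hST : ∀ i, ∀ h ∈ M, S (T i h) ∈ M)
    {k : K} (hk : k ∈ closedSpanImage T M) : S k ∈ M := by
  have hle : ⨆ i, M.map (T i : H →ₗ[R] K) ≤ M.comap (S : K →ₗ[R] H) :=
    iSup_le fun i => Submodule.map_le_iff_le_comap.mpr fun h hh => hST i h hh
  exact Submodule.topologicalClosure_minimal _ hle (hM.preimage S.continuous) hk

end ClosedSpanImage

theorem adjoint_apply_apply_mem_of_orthogonal_quasiRep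
    {A E H K : Type*} [Semiring A] [Algebra ℂ A] [Star A]
    [NormedAddCommGroup H] [InnerProductSpace ℂ H] [CompleteSpace H]
    [NormedAddCommGroup K] [InnerProductSpace ℂ K] [CompleteSpace K]
    {ρ : E → A} {φ : A →⋆ₐ[ℂ] (H →L[ℂ] H)} {Φ : E → (H →L[ℂ] K)}
    (hΦ : ∀ x : E, (adjoint (Φ x)).comp (Φ x) = φ (ρ x ^ 2))
    (hΦorth : ∀ x y : E, x ≠ y → (adjoint (Φ x)).comp (Φ y) = 0)
    {M : Submodule ℂ H} (hMinv : ∀ (a : A), ∀ h ∈ M, φ a h ∈ M)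
    (x y : E) {h : H} (hh : h ∈ M) : adjoint (Φ x) (Φ y h) ∈ M := by
  obtain rfl | hxy := eq_or_ne x y
  · simpa only [← comp_apply, hΦ] using hMinv _ h hh
  · simp only [← comp_apply, hΦorth x y hxy, zero_apply, M.zero_mem]

theorem irreducible_quasi_rep_gives_irreducible_rep_general
    {A : Type} [CStarAlgebra A]
    {E : Type}
    {H : Type} [NormedAddCommGroup H] [InnerProductSpace ℂ H] [CompleteSpace H]
    {K : Type} [NormedAddCommGroup K] [InnerProductSpace ℂ K] [CompleteSpace K]
    (ρ : E → A)
    (φ : A →⋆ₐ[ℂ] (H →L[ℂ] H)) (Φ : E → (H →L[ℂ] K))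
    (hΦ : ∀ x : E, (adjoint (Φ x)).comp (Φ x) = φ (ρ x ^ 2))
    (hΦorth : ∀ x y : E, x ≠ y → (adjoint (Φ x)).comp (Φ y) = 0)
    (hΦirr : ∀ (M : Submodule ℂ H) (N : Submodule ℂ K),
      IsClosed (M : Set H) → IsClosed (N : Set K) →
      (∀ (x : E), ∀ h ∈ M, Φ x h ∈ N) → (∀ (x : E), ∀ k ∈ N, adjoint (Φ x) k ∈ M) →
      (M = ⊥ ∧ N = ⊥) ∨ (M = ⊤ ∧ N = ⊤)) :
    ∀ M : Submodule ℂ H, IsClosed (M : Set H) →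
      (∀ (a : A), ∀ h ∈ M, φ a h ∈ M) → M = ⊥ ∨ M = ⊤ := by
  intro M hM hMinv
  have hpair := hΦirr M (closedSpanImage Φ M) hM (isClosed_closedSpanImage Φ M)
    (fun x _ hh => apply_mem_closedSpanImage x hh)
    (fun x _ hk => apply_mem_of_mem_closedSpanImage hM (adjoint (Φ x))
      (fun y _ hh => adjoint_apply_apply_mem_of_orthogonal_quasiRep hΦ hΦorth hMinv x y hh) hk)
  exact hpair.imp And.left And.left

/-- **Theorem 4.6, first part.** Let `Φ : E → B(H,K)` be a quasi-representation of a Finsler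
`A`-module satisfying in addition `Φ(x)* Φ(y) = 0` for `x ≠ y` (as for the
quasi-representation of Theorem 2.3). If `Φ` is irreducible (the only pairs of closed
subspaces `(M,N)` with `Φ(E)M ⊆ N` and `Φ(E)*N ⊆ M` are `(0,0)` and `(H,K)`),
then `φ` is an irreducible representation. -/
theorem irreducible_quasi_rep_gives_irreducible_rep
    {A : Type} [CStarAlgebra A] [PartialOrder A] [StarOrderedRing A]
    {E : Type} [NormedAddCommGroup E] [NormedSpace ℂ E] [CompleteSpace E] [Module Aᵐᵒᵖ E]
    {H : Type} [NormedAddCommGroup H] [InnerProductSpace ℂ H] [CompleteSpace H]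
    {K : Type} [NormedAddCommGroup K] [InnerProductSpace ℂ K] [CompleteSpace K]
    (ρ : E → A)
    (hρ_pos : ∀ x : E, 0 ≤ ρ x)
    (hρ_norm : ∀ x : E, ‖ρ x‖ = ‖x‖)
    (hρ_smul : ∀ (x : E) (a : A), ρ (op a • x) ^ 2 = star a * ρ x ^ 2 * a)
    (φ : A →⋆ₐ[ℂ] (H →L[ℂ] H)) (Φ : E → (H →L[ℂ] K))
    (hΦ : ∀ x : E, (adjoint (Φ x)).comp (Φ x) = φ (ρ x ^ 2))
    (hΦorth : ∀ x y : E, x ≠ y → (adjoint (Φ x)).comp (Φ y) = 0)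
    (hΦirr : ∀ (M : Submodule ℂ H) (N : Submodule ℂ K),
      IsClosed (M : Set H) → IsClosed (N : Set K) →
      (∀ (x : E), ∀ h ∈ M, Φ x h ∈ N) → (∀ (x : E), ∀ k ∈ N, adjoint (Φ x) k ∈ M) →
      (M = ⊥ ∧ N = ⊥) ∨ (M = ⊤ ∧ N = ⊤)) :
    ∀ M : Submodule ℂ H, IsClosed (M : Set H) →
      (∀ (a : A), ∀ h ∈ M, φ a h ∈ M) → M = ⊥ ∨ M = ⊤ :=
  irreducible_quasi_rep_gives_irreducible_rep_general ρ φ Φ hΦ hΦorth hΦirr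
end

section
/- Let E be a full Finsler A-module with associated map ρ : E → A⁺, let φ : A → B(H) be a representation, and let Φ : E → B(H,K) be a quasi-representation satisfying Φ(x·a) = Φ(x)φ(a) for all x ∈ E, a ∈ A, and such that the closed linear span of {Φ(x)h : x ∈ E, h ∈ H} equals K. If φ is irreducible, then Φ is irreducible. -/
/-!
The closed subspace `M` is invariant under every `φ (ρ x ^ 2) = Φ(x)* Φ(x)`, hence, by fullness
and continuity of `φ`, under all of `φ(A)`; irreducibility of `φ` leaves `M = 0` or `M = H`.
If `M = H`, then `N` contains every `Φ(x) h`, whose span is dense. If `M = 0`, then every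
`Φ(x)*` kills `N`, so the same dense span lies in `Nᗮ`.
-/

open MulOpposite ContinuousLinearMap
open scoped CStarAlgebra

namespace Submodule

theorem eq_top_of_dense_span_subset {R V : Type*} [Semiring R]
    [AddCommMonoid V] [TopologicalSpace V] [Module R V] [ContinuousAdd V]
    [ContinuousConstSMul R V] {S : Set V} (hS : (span R S).topologicalClosure = ⊤)
    {P : Submodule R V} (hP : IsClosed (P : Set V)) (hSP : S ⊆ P) : P = ⊤ :=
  top_unique (hS ▸ topologicalClosure_minimal _ (span_le.2 hSP) hP)

section Preserving

variable {𝕜 V : Type*} [NontriviallyNormedField 𝕜] [NormedAddCommGroup V] [NormedSpace 𝕜 V]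

def preservingCLMs (M : Submodule 𝕜 V) : Submodule 𝕜 (V →L[𝕜] V) where
  carrier := {T | ∀ v ∈ M, T v ∈ M}
  add_mem' hS hT v hv := M.add_mem (hS v hv) (hT v hv)
  zero_mem' _ _ := M.zero_mem
  smul_mem' c _ hT v hv := M.smul_mem c (hT v hv)

theorem isClosed_preservingCLMs {M : Submodule 𝕜 V} (hM : IsClosed (M : Set V)) :
    IsClosed (M.preservingCLMs : Set (V →L[𝕜] V)) := by
  have : (M.preservingCLMs : Set (V →L[𝕜] V)) = ⋂ v ∈ M, (fun T => T v) ⁻¹' M := by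
    ext T
    simp [preservingCLMs]
  rw [this]
  exact isClosed_biInter fun v _ => hM.preimage (apply 𝕜 V v).continuous

end Preserving

end Submodule

theorem irreducible_rep_gives_irreducible_quasi_rep_general
    {A : Type} [CStarAlgebra A]
    {E : Type}
    {H : Type} [NormedAddCommGroup H] [InnerProductSpace ℂ H] [CompleteSpace H]
    {K : Type} [NormedAddCommGroup K] [InnerProductSpace ℂ K] [CompleteSpace K]
    (ρ : E → A)
    (φ : A →⋆ₐ[ℂ] (H →L[ℂ] H)) (Φ : E → (H →L[ℂ] K))
    (hΦ : ∀ x : E, (adjoint (Φ x)).comp (Φ x) = φ (ρ x ^ 2))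
    (hfull : (Submodule.span ℂ {a : A | ∃ x : E, a = ρ x ^ 2}).topologicalClosure = ⊤)
    (hspan : (Submodule.span ℂ {k : K | ∃ (x : E) (h : H), Φ x h = k}).topologicalClosure = ⊤)
    (hφirr : ∀ M : Submodule ℂ H, IsClosed (M : Set H) →
      (∀ (a : A), ∀ h ∈ M, φ a h ∈ M) → M = ⊥ ∨ M = ⊤) :
    ∀ (M : Submodule ℂ H) (N : Submodule ℂ K),
      IsClosed (M : Set H) → IsClosed (N : Set K) →
      (∀ (x : E), ∀ h ∈ M, Φ x h ∈ N) → (∀ (x : E), ∀ k ∈ N, adjoint (Φ x) k ∈ M) →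
      (M = ⊥ ∧ N = ⊥) ∨ (M = ⊤ ∧ N = ⊤) := by
  intro M N hM hN hMN hNM
  have hφM : M.preservingCLMs.comap φ.toLinearMap = ⊤ := by
    refine Submodule.eq_top_of_dense_span_subset hfull
      ((Submodule.isClosed_preservingCLMs hM).preimage (map_continuous φ)) ?_
    rintro _ ⟨x, rfl⟩ h hh
    simpa [← hΦ x] using hNM x _ (hMN x h hh)
  rcases hφirr M hM (fun a => hφM.ge trivial) with rfl | rfl
  · refine .inl ⟨rfl, (Submodule.orthogonal_eq_top_iff N).1 ?_⟩
    refine Submodule.eq_top_of_dense_span_subset hspan N.isClosed_orthogonal ?_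
    rintro _ ⟨x, h, rfl⟩ k hk
    rw [← adjoint_inner_left, (Submodule.mem_bot ℂ).1 (hNM x k hk), inner_zero_left]
  · exact .inr ⟨rfl, Submodule.eq_top_of_dense_span_subset hspan hN
      (by rintro _ ⟨x, h, rfl⟩; exact hMN x h trivial)⟩

/-- **Theorem 4.6, second part.** Let `E` be a full Finsler `A`-module, `Φ : E → B(H,K)` a
quasi-representation with `Φ(x·a) = Φ(x)φ(a)` whose range has dense span in `K`
(as for the quasi-representation of Theorem 2.3). If `φ` is irreducible then `Φ` is
irreducible. -/
theorem irreducible_rep_gives_irreducible_quasi_rep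
    {A : Type} [CStarAlgebra A] [PartialOrder A] [StarOrderedRing A]
    {E : Type} [NormedAddCommGroup E] [NormedSpace ℂ E] [CompleteSpace E] [Module Aᵐᵒᵖ E]
    {H : Type} [NormedAddCommGroup H] [InnerProductSpace ℂ H] [CompleteSpace H]
    {K : Type} [NormedAddCommGroup K] [InnerProductSpace ℂ K] [CompleteSpace K]
    (ρ : E → A)
    (hρ_pos : ∀ x : E, 0 ≤ ρ x)
    (hρ_norm : ∀ x : E, ‖ρ x‖ = ‖x‖)
    (hρ_smul : ∀ (x : E) (a : A), ρ (op a • x) ^ 2 = star a * ρ x ^ 2 * a)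
    (φ : A →⋆ₐ[ℂ] (H →L[ℂ] H)) (Φ : E → (H →L[ℂ] K))
    (hΦ : ∀ x : E, (adjoint (Φ x)).comp (Φ x) = φ (ρ x ^ 2))
    (hΦmod : ∀ (x : E) (a : A), Φ (op a • x) = (Φ x).comp (φ a))
    (hfull : (Submodule.span ℂ {a : A | ∃ x : E, a = ρ x ^ 2}).topologicalClosure = ⊤)
    (hspan : (Submodule.span ℂ {k : K | ∃ (x : E) (h : H), Φ x h = k}).topologicalClosure = ⊤)
    (hφirr : ∀ M : Submodule ℂ H, IsClosed (M : Set H) →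
      (∀ (a : A), ∀ h ∈ M, φ a h ∈ M) → M = ⊥ ∨ M = ⊤) :
    ∀ (M : Submodule ℂ H) (N : Submodule ℂ K),
      IsClosed (M : Set H) → IsClosed (N : Set K) →
      (∀ (x : E), ∀ h ∈ M, Φ x h ∈ N) → (∀ (x : E), ∀ k ∈ N, adjoint (Φ x) k ∈ M) →
      (M = ⊥ ∧ N = ⊥) ∨ (M = ⊤ ∧ N = ⊤) :=
  irreducible_rep_gives_irreducible_quasi_rep_general ρ φ Φ hΦ hfull hspan hφirr
end

section
/- Let E be a full Finsler A-module with associated map ρ : E → A⁺, let φ : A → B(H) be an irreducible representation, and let Φ : E → B(H,K) be a quasi-representation satisfying Φ(x·a) = Φ(x)φ(a) for all x ∈ E, a ∈ A, and such that the closed linear span of {Φ(x)h : x ∈ E, h ∈ H} equals K. Then Φ is nondegenerate (i.e., in addition the closed linear span of {Φ(x)*k : x ∈ E, k ∈ K} equals H) and Φ is irreducible. -/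
/-! Since `Φ(x)* Φ(x) = φ(ρ(x)²)` and the `ρ(x)²` span a dense subspace of `A`, a closed subspace
of `H` containing `Φ(x)* Φ(x) h` for every `x` contains `φ(A) h`, hence `h = φ(1) h`. Applied to the
closed span of the ranges of the `Φ(x)*` this gives nondegeneracy; applied to the first component
`M` of an invariant pair `(M, N)` it shows that `M` is `φ`-invariant, so `M = 0` or `M = H`. In the
first case `N` is orthogonal to every range of `Φ(x)`, whose span is dense, so `N = 0`; in the
second `N` contains all these ranges, so `N = K`. -/

open MulOpposite ContinuousLinearMap
open scoped CStarAlgebra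

theorem ContinuousLinearMap.apply_mem_of_dense_span {R V W : Type*} [Semiring R]
    [TopologicalSpace V] [AddCommMonoid V] [Module R V] [ContinuousAdd V]
    [ContinuousConstSMul R V] [TopologicalSpace W] [AddCommMonoid W] [Module R W]
    (L : V →L[R] W) {S : Set V} (hS : (Submodule.span R S).topologicalClosure = ⊤)
    {M : Submodule R W} (hM : IsClosed (M : Set W)) (hSM : ∀ s ∈ S, L s ∈ M) (v : V) :
    L v ∈ M := by
  have hle : (Submodule.span R S).topologicalClosure ≤ M.comap (L : V →ₗ[R] W) :=
    Submodule.topologicalClosure_minimal _ (Submodule.span_le.2 hSM) (hM.preimage L.continuous)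
  exact hle (hS ▸ Submodule.mem_top)

section Representation

variable {A H : Type} [CStarAlgebra A]
  [NormedAddCommGroup H] [InnerProductSpace ℂ H] [CompleteSpace H]
  (φ : A →⋆ₐ[ℂ] (H →L[ℂ] H)) {S : Set A} (hS : (Submodule.span ℂ S).topologicalClosure = ⊤)
  {M : Submodule ℂ H} (hM : IsClosed (M : Set H)) {h : H}
include hS hM

theorem StarAlgHom.apply_apply_mem_of_dense_span (hSh : ∀ s ∈ S, φ s h ∈ M) (a : A) :
    φ a h ∈ M :=
  ((apply ℂ H h).comp ⟨φ.toAlgHom.toLinearMap, map_continuous φ⟩).apply_mem_of_dense_span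
    hS hM hSh a

theorem StarAlgHom.mem_of_dense_span (hSh : ∀ s ∈ S, φ s h ∈ M) : h ∈ M := by
  simpa using φ.apply_apply_mem_of_dense_span hS hM hSh 1

end Representation

section QuasiRepresentation

variable {A E H K : Type} [CStarAlgebra A]
  [NormedAddCommGroup H] [InnerProductSpace ℂ H] [CompleteSpace H]
  [NormedAddCommGroup K] [InnerProductSpace ℂ K] [CompleteSpace K]
  {ρ : E → A} {φ : A →⋆ₐ[ℂ] (H →L[ℂ] H)} {Φ : E → (H →L[ℂ] K)}

theorem eq_zero_of_forall_adjoint_apply_eq_zero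
    (hspan : (Submodule.span ℂ {k : K | ∃ (x : E) (h : H), Φ x h = k}).topologicalClosure = ⊤)
    {k : K} (hk : ∀ x, adjoint (Φ x) k = 0) : k = 0 := by
  have hkk : innerSL ℂ k k ∈ (⊥ : Submodule ℂ ℂ) := by
    refine (innerSL ℂ k).apply_mem_of_dense_span hspan (by simp) ?_ k
    rintro _ ⟨x, h, rfl⟩
    simp [← adjoint_inner_left, hk x]
  simpa using hkk

variable (hΦ : ∀ x : E, (adjoint (Φ x)).comp (Φ x) = φ (ρ x ^ 2))
  (hfull : (Submodule.span ℂ {a : A | ∃ x : E, a = ρ x ^ 2}).topologicalClosure = ⊤)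
include hΦ hfull

theorem closure_span_range_adjoint_eq_top :
    (Submodule.span ℂ {h : H | ∃ (x : E) (k : K), adjoint (Φ x) k = h}).topologicalClosure =
      ⊤ := by
  refine Submodule.eq_top_iff'.2 fun h ↦ φ.mem_of_dense_span hfull
    (Submodule.isClosed_topologicalClosure _) ?_
  rintro _ ⟨x, rfl⟩
  rw [← hΦ x]
  exact Submodule.le_topologicalClosure _ (Submodule.subset_span ⟨x, Φ x h, rfl⟩)

theorem apply_mem_of_invariant_pair {M : Submodule ℂ H} (hM : IsClosed (M : Set H))
    {N : Submodule ℂ K} (hMN : ∀ x, ∀ h ∈ M, Φ x h ∈ N) (hNM : ∀ x, ∀ k ∈ N, adjoint (Φ x) k ∈ M)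
    (a : A) : ∀ h ∈ M, φ a h ∈ M := by
  intro h hh
  refine φ.apply_apply_mem_of_dense_span hfull hM ?_ a
  rintro _ ⟨x, rfl⟩
  rw [← hΦ x]
  exact hNM x _ (hMN x h hh)

end QuasiRepresentation

theorem full_and_irreducible_rep_gives_nondegenerate_irreducible_quasi_rep_general
    {A : Type} [CStarAlgebra A]
    {E : Type}
    {H : Type} [NormedAddCommGroup H] [InnerProductSpace ℂ H] [CompleteSpace H]
    {K : Type} [NormedAddCommGroup K] [InnerProductSpace ℂ K] [CompleteSpace K]
    (ρ : E → A)
    (φ : A →⋆ₐ[ℂ] (H →L[ℂ] H)) (Φ : E → (H →L[ℂ] K))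
    (hΦ : ∀ x : E, (adjoint (Φ x)).comp (Φ x) = φ (ρ x ^ 2))
    (hfull : (Submodule.span ℂ {a : A | ∃ x : E, a = ρ x ^ 2}).topologicalClosure = ⊤)
    (hspan : (Submodule.span ℂ {k : K | ∃ (x : E) (h : H), Φ x h = k}).topologicalClosure = ⊤)
    (hφirr : ∀ M : Submodule ℂ H, IsClosed (M : Set H) →
      (∀ (a : A), ∀ h ∈ M, φ a h ∈ M) → M = ⊥ ∨ M = ⊤) :
    (Submodule.span ℂ
      {h : H | ∃ (x : E) (k : K), adjoint (Φ x) k = h}).topologicalClosure = ⊤ ∧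
    (∀ (M : Submodule ℂ H) (N : Submodule ℂ K),
      IsClosed (M : Set H) → IsClosed (N : Set K) →
      (∀ (x : E), ∀ h ∈ M, Φ x h ∈ N) → (∀ (x : E), ∀ k ∈ N, adjoint (Φ x) k ∈ M) →
      (M = ⊥ ∧ N = ⊥) ∨ (M = ⊤ ∧ N = ⊤)) := by
  refine ⟨closure_span_range_adjoint_eq_top hΦ hfull, fun M N hM hN hMN hNM ↦ ?_⟩
  rcases hφirr M hM (apply_mem_of_invariant_pair hΦ hfull hM hMN hNM) with rfl | rfl
  · refine .inl ⟨rfl, (Submodule.eq_bot_iff N).2 fun k hk ↦ ?_⟩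
    exact eq_zero_of_forall_adjoint_apply_eq_zero hspan fun x ↦ by simpa using hNM x k hk
  · refine .inr ⟨rfl, Submodule.eq_top_iff'.2 fun k ↦ ?_⟩
    exact (ContinuousLinearMap.id ℂ K).apply_mem_of_dense_span hspan hN
      (by rintro _ ⟨x, h, rfl⟩; exact hMN x h Submodule.mem_top) k

/-- **Corollary 4.8.** Let `E` be a full Finsler `A`-module, `φ : A → B(H)` an irreducible
representation and `Φ : E → B(H,K)` a quasi-representation with `Φ(x·a) = Φ(x)φ(a)` whose
range has dense span in `K`. Then `Φ` is nondegenerate and irreducible. -/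
theorem full_and_irreducible_rep_gives_nondegenerate_irreducible_quasi_rep
    {A : Type} [CStarAlgebra A] [PartialOrder A] [StarOrderedRing A]
    {E : Type} [NormedAddCommGroup E] [NormedSpace ℂ E] [CompleteSpace E] [Module Aᵐᵒᵖ E]
    {H : Type} [NormedAddCommGroup H] [InnerProductSpace ℂ H] [CompleteSpace H]
    {K : Type} [NormedAddCommGroup K] [InnerProductSpace ℂ K] [CompleteSpace K]
    (ρ : E → A)
    (hρ_pos : ∀ x : E, 0 ≤ ρ x)
    (hρ_norm : ∀ x : E, ‖ρ x‖ = ‖x‖)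
    (hρ_smul : ∀ (x : E) (a : A), ρ (op a • x) ^ 2 = star a * ρ x ^ 2 * a)
    (φ : A →⋆ₐ[ℂ] (H →L[ℂ] H)) (Φ : E → (H →L[ℂ] K))
    (hΦ : ∀ x : E, (adjoint (Φ x)).comp (Φ x) = φ (ρ x ^ 2))
    (hΦmod : ∀ (x : E) (a : A), Φ (op a • x) = (Φ x).comp (φ a))
    (hfull : (Submodule.span ℂ {a : A | ∃ x : E, a = ρ x ^ 2}).topologicalClosure = ⊤)
    (hspan : (Submodule.span ℂ {k : K | ∃ (x : E) (h : H), Φ x h = k}).topologicalClosure = ⊤)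
    (hφirr : ∀ M : Submodule ℂ H, IsClosed (M : Set H) →
      (∀ (a : A), ∀ h ∈ M, φ a h ∈ M) → M = ⊥ ∨ M = ⊤) :
    (Submodule.span ℂ
      {h : H | ∃ (x : E) (k : K), adjoint (Φ x) k = h}).topologicalClosure = ⊤ ∧
    (∀ (M : Submodule ℂ H) (N : Submodule ℂ K),
      IsClosed (M : Set H) → IsClosed (N : Set K) →
      (∀ (x : E), ∀ h ∈ M, Φ x h ∈ N) → (∀ (x : E), ∀ k ∈ N, adjoint (Φ x) k ∈ M) →
      (M = ⊥ ∧ N = ⊥) ∨ (M = ⊤ ∧ N = ⊤)) :=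
  full_and_irreducible_rep_gives_nondegenerate_irreducible_quasi_rep_general ρ φ Φ hΦ hfull hspan
    hφirr
end

section
/- Let E be a Hilbert C*-module over a C*-algebra A and F a Hilbert C*-module over a C*-algebra B, let φ : A → B be a *-homomorphism, and let Φ : E → F be a linear map satisfying ⟨Φ(x), Φ(x)⟩ = φ(⟨x, x⟩) for all x ∈ E. Then Φ(x·a) = Φ(x)·φ(a) for all x ∈ E and a ∈ A. -/
/-!
Polarization recovers every inner product `⟪x, y⟫` from the quadratic values `⟪z, z⟫`, so `Φ`
satisfies `⟪Φ x, Φ y⟫ = φ ⟪x, y⟫` for all `x, y`. Expanding `d = Φ (x·a) - Φ(x)·φ(a)` with this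
identity gives `⟪d, d⟫ = φ (a* ⟪x, x⟫ a - a* ⟪x, x⟫ a - a* ⟪x, x⟫ a + a* ⟪x, x⟫ a) = 0`,
hence `d = 0` by definiteness of the inner product.
-/

open MulOpposite

/-- The class `CStarModule` as it stood in Mathlib (December 2024): a Hilbert C*-module over `A`
as a *right* module, i.e. with an action of `Aᵐᵒᵖ`. -/
class CStarModuleRight (A : outParam <| Type*) (E : Type*) [NonUnitalSemiring A] [StarRing A]
    [Module ℂ A] [AddCommGroup E] [Module ℂ E] [PartialOrder A] [SMul Aᵐᵒᵖ E] [Norm A] [Norm E]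
    extends Inner A E where
  inner_add_right {x} {y} {z} : inner x (y + z) = inner x y + inner x z
  inner_self_nonneg {x} : 0 ≤ inner x x
  inner_self {x} : inner x x = 0 ↔ x = 0
  inner_op_smul_right {a : A} {x y : E} : inner x (op a • y) = inner x y * a
  inner_smul_right_complex {z : ℂ} {x} {y} : inner x (z • y) = z • inner x y
  star_inner x y : star (inner x y) = inner y x
  norm_eq_sqrt_norm_inner_self x : ‖x‖ = √‖inner x x‖

namespace LinearMap

variable {M N : Type*} [AddCommGroup M] [Module ℂ M] [AddCommGroup N] [Module ℂ N]

theorem four_smul_apply_eq_polarization (f : M →ₗ⋆[ℂ] M →ₗ[ℂ] N) (x y : M) :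
    (4 : ℂ) • f x y = f (x + y) (x + y) - f (x - y) (x - y)
      - Complex.I • f (x + Complex.I • y) (x + Complex.I • y)
      + Complex.I • f (x - Complex.I • y) (x - Complex.I • y) := by
  simp only [map_add, map_sub, map_smulₛₗ, add_apply, sub_apply, smul_apply, Complex.conj_I,
    RingHom.id_apply]
  match_scalars <;> ring_nf <;> simp only [Complex.I_sq] <;> ring

theorem sesq_ext_of_apply_self {f g : M →ₗ⋆[ℂ] M →ₗ[ℂ] N} (h : ∀ x, f x x = g x x) : f = g := by
  ext x y
  apply smul_right_injective N (by norm_num : (4 : ℂ) ≠ 0)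
  simp only [four_smul_apply_eq_polarization, h]

end LinearMap

namespace CStarModuleRight

variable {A : Type*} [NonUnitalRing A] [StarRing A] [Module ℂ A] [PartialOrder A] [Norm A]
  {E : Type*} [AddCommGroup E] [Module ℂ E] [SMul Aᵐᵒᵖ E] [Norm E] [CStarModuleRight A E]

lemma inner_add_left {x y z : E} : inner A (x + y) z = inner A x z + inner A y z := by
  rw [← star_inner z, inner_add_right, star_add, star_inner, star_inner]

lemma inner_op_smul_left {a : A} {x y : E} : inner A (op a • x) y = star a * inner A x y := by
  rw [← star_inner y, inner_op_smul_right, star_mul, star_inner]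

variable [StarModule ℂ A]

lemma inner_smul_left_complex {c : ℂ} {x y : E} : inner A (c • x) y = star c • inner A x y := by
  rw [← star_inner y, inner_smul_right_complex, star_smul, star_inner]

variable (A) in
def innerₛₗ : E →ₗ⋆[ℂ] E →ₗ[ℂ] A where
  toFun x :=
    { toFun := inner A x
      map_add' _ _ := inner_add_right
      map_smul' _ _ := inner_smul_right_complex }
  map_add' _ _ := by ext; exact inner_add_left
  map_smul' _ _ := by ext; exact inner_smul_left_complex

lemma innerₛₗ_apply {x y : E} : innerₛₗ A x y = inner A x y := rfl

lemma inner_sub_left {x y z : E} : inner A (x - y) z = inner A x z - inner A y z := by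
  simp only [← innerₛₗ_apply, map_sub, LinearMap.sub_apply]

lemma inner_sub_right {x y z : E} : inner A x (y - z) = inner A x y - inner A x z := by
  simp only [← innerₛₗ_apply, map_sub]

variable {B : Type*} [NonUnitalRing B] [StarRing B] [Module ℂ B] [StarModule ℂ B]
  [PartialOrder B] [Norm B] {F : Type*} [AddCommGroup F] [Module ℂ F] [SMul Bᵐᵒᵖ F] [Norm F]
  [CStarModuleRight B F]

theorem inner_map_map_of_inner_self {G : Type*} [FunLike G A B] [LinearMapClass G ℂ A B]
    (φ : G) (Φ : E →ₗ[ℂ] F) (h : ∀ x, inner B (Φ x) (Φ x) = φ (inner A x x)) (x y : E) :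
    inner B (Φ x) (Φ y) = φ (inner A x y) :=
  LinearMap.congr_fun₂ (LinearMap.sesq_ext_of_apply_self (f := (innerₛₗ B ∘ₛₗ Φ).compl₂ Φ)
    (g := (innerₛₗ A).compr₂ₛₗ (φ : A →ₗ[ℂ] B)) h) x y

end CStarModuleRight

theorem hilbert_module_phi_morphism_is_module_map_general
    {A : Type} [CStarAlgebra A] [PartialOrder A]
    {B : Type} [CStarAlgebra B] [PartialOrder B]
    {E : Type} [NormedAddCommGroup E] [Module ℂ E] [Module Aᵐᵒᵖ E]
    [CStarModuleRight A E]
    {F : Type} [NormedAddCommGroup F] [Module ℂ F] [Module Bᵐᵒᵖ F]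
    [CStarModuleRight B F]
    (φ : A →⋆ₐ[ℂ] B) (Φ : E →ₗ[ℂ] F)
    (hΦ : ∀ x : E, (inner B (Φ x) (Φ x) : B) = φ (inner A x x : A)) :
    ∀ (x : E) (a : A), Φ (op a • x) = op (φ a) • Φ x := by
  have hinner := CStarModuleRight.inner_map_map_of_inner_self φ Φ hΦ
  intro x a
  rw [← sub_eq_zero, ← CStarModuleRight.inner_self (A := B)]
  simp only [CStarModuleRight.inner_sub_left, CStarModuleRight.inner_sub_right, hinner,
    CStarModuleRight.inner_op_smul_left, CStarModuleRight.inner_op_smul_right, ← map_star φ,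
    ← map_mul φ, ← map_sub φ]
  rw [← map_zero φ]
  congr 1
  noncomm_ring

/-- **(Definition 2.1, claim for Hilbert C*-modules.)** If `E`, `F` are Hilbert C*-modules over
C*-algebras `A`, `B`, `φ : A → B` is a *-homomorphism and `Φ : E → F` is a linear map with
`⟪Φ x, Φ x⟫ = φ ⟪x, x⟫` for all `x`, then `Φ(x·a) = Φ(x)·φ(a)` for all `x ∈ E`, `a ∈ A`. -/
theorem hilbert_module_phi_morphism_is_module_map
    {A : Type} [CStarAlgebra A] [PartialOrder A] [StarOrderedRing A]
    {B : Type} [CStarAlgebra B] [PartialOrder B] [StarOrderedRing B]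
    {E : Type} [NormedAddCommGroup E] [Module ℂ E] [Module Aᵐᵒᵖ E]
    [CStarModuleRight A E] [CompleteSpace E]
    {F : Type} [NormedAddCommGroup F] [Module ℂ F] [Module Bᵐᵒᵖ F]
    [CStarModuleRight B F] [CompleteSpace F]
    (φ : A →⋆ₐ[ℂ] B) (Φ : E →ₗ[ℂ] F)
    (hΦ : ∀ x : E, (inner B (Φ x) (Φ x) : B) = φ (inner A x x : A)) :
    ∀ (x : E) (a : A), Φ (op a • x) = op (φ a) • Φ x :=
  hilbert_module_phi_morphism_is_module_map_general φ Φ hΦ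
end
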